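/- For every κ > 0 there exist r₀ ∈ (0,1) and c > 0 such that for all r ∈ [r₀, 1), q_κ(r) ≤ p(κ) − c√(1−r), where p(κ) = P(|Z| ≤ κ) for a standard Gaussian Z and q_κ(r) = P(|Z₀| ≤ κ, |Z_r| ≤ κ) for a centered bivariate Gaussian pair with unit variances and correlation r. -/

import Mathlib

open MeasureTheory ProbabilityTheory

/-- `p κ = P(|Z| ≤ κ)` for a standard Gaussian `Z`. -/
noncomputable def pGauss (κ : ℝ) : ℝ := ((gaussianReal 0 1) {z : ℝ | |z| ≤ κ}).toReal

/-- `q κ r = P(|Z₀| ≤ κ, |Z_r| ≤ κ)` for a correlation-`r` bivariate standard Gaussian pair. -/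
noncomputable def qGauss (κ r : ℝ) : ℝ :=
  (((gaussianReal 0 1).prod (gaussianReal 0 1))
    {p : ℝ × ℝ | |p.1| ≤ κ ∧ |r * p.1 + Real.sqrt (1 - r ^ 2) * p.2| ≤ κ}).toReal

/-!
`p(κ) - q_κ(r)` is the probability that `|Z₀| ≤ κ < |Z_r|`, where `Z_r = r Z₀ + √(1-r²) Z'`.
With `s = √(1-r²)`, this event contains `Z₀ ∈ (κ - κs, κ]`, `Z' > 2κ` (there
`Z_r > rκ + (2 - r)κs ≥ κ` because `s ≥ 1 - r`), whose probability is at least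
`κ s φ(κ) φ(2κ+1)` by monotonicity of the density `φ` on `[0, ∞)`; finally `√(1-r) ≤ √(1-r²)`.
-/

open Set NNReal

lemma gaussianPDFReal_antitoneOn (μ : ℝ) (v : ℝ≥0) :
    AntitoneOn (gaussianPDFReal μ v) (Ici μ) := by
  intro x hx y hy hxy
  simp only [gaussianPDFReal]
  gcongr
  exact sub_nonneg.mpr hx

lemma ofReal_mul_gaussianPDFReal_le_gaussianReal_Ioc (μ : ℝ) {v : ℝ≥0} (hv : v ≠ 0) {a b : ℝ}
    (ha : μ ≤ a) :
    ENNReal.ofReal ((b - a) * gaussianPDFReal μ v b) ≤ gaussianReal μ v (Ioc a b) := by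
  rw [gaussianReal_apply μ hv]
  calc ENNReal.ofReal ((b - a) * gaussianPDFReal μ v b)
      = ∫⁻ _ in Ioc a b, ENNReal.ofReal (gaussianPDFReal μ v b) := by
        rw [setLIntegral_const, Real.volume_Ioc,
          ← ENNReal.ofReal_mul (gaussianPDFReal_nonneg μ v b), mul_comm]
    _ ≤ ∫⁻ x in Ioc a b, gaussianPDF μ v x :=
        setLIntegral_mono (measurable_gaussianPDF μ v) fun x hx =>
          ENNReal.ofReal_le_ofReal <| gaussianPDFReal_antitoneOn μ v
            (ha.trans hx.1.le) (ha.trans (hx.1.le.trans hx.2)) hx.2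

lemma pGauss_sub_qGauss (κ r : ℝ) :
    pGauss κ - qGauss κ r = (((gaussianReal 0 1).prod (gaussianReal 0 1))
      {p : ℝ × ℝ | |p.1| ≤ κ ∧ κ < |r * p.1 + √(1 - r ^ 2) * p.2|}).toReal := by
  set μ := (gaussianReal 0 1).prod (gaussianReal 0 1)
  set B := {p : ℝ × ℝ | |p.1| ≤ κ ∧ |r * p.1 + √(1 - r ^ 2) * p.2| ≤ κ}
  set C := {p : ℝ × ℝ | |p.1| ≤ κ ∧ κ < |r * p.1 + √(1 - r ^ 2) * p.2|}
  have hA : {z : ℝ | |z| ≤ κ} ×ˢ univ = B ∪ C := by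
    ext p
    simp only [mem_prod, mem_ofPred_eq, mem_univ, and_true, mem_union, B, C]
    constructor
    · intro h
      exact (le_or_gt _ κ).imp (⟨h, ·⟩) (⟨h, ·⟩)
    · rintro (h | h) <;> exact h.1
  have hC : MeasurableSet C :=
    (measurableSet_le measurable_fst.abs measurable_const).inter
      (measurableSet_lt measurable_const
        ((measurable_fst.const_mul r).add (measurable_snd.const_mul _)).abs)
  have hBC : Disjoint B C :=
    disjoint_left.mpr fun _ hB hC => (not_lt.mpr hB.2) hC.2
  have hp : pGauss κ = (μ ({z : ℝ | |z| ≤ κ} ×ˢ univ)).toReal := by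
    rw [pGauss, Measure.prod_prod, measure_univ, mul_one]
  rw [hp, qGauss, hA, measure_union hBC hC,
    ENNReal.toReal_add (measure_ne_top _ _) (measure_ne_top _ _), add_sub_cancel_left]

lemma Ioc_prod_Ioi_subset_abs_le_lt_abs {κ r : ℝ} (hκ : 0 ≤ κ) (hr₀ : 0 ≤ r) (hr₁ : r < 1) :
    Ioc (κ - κ * √(1 - r ^ 2)) κ ×ˢ Ioi (2 * κ) ⊆
      {p : ℝ × ℝ | |p.1| ≤ κ ∧ κ < |r * p.1 + √(1 - r ^ 2) * p.2|} := by
  rintro ⟨x, y⟩ ⟨⟨hx₀, hx₁⟩, hy⟩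
  set s := √(1 - r ^ 2)
  have hs₀ : 0 < s := Real.sqrt_pos.mpr (by nlinarith)
  have hs₁ : s ≤ 1 := Real.sqrt_le_one.mpr (by nlinarith)
  have hrs : 1 - r ≤ s := Real.le_sqrt_of_sq_le (by nlinarith)
  refine ⟨abs_le.mpr ⟨by nlinarith, hx₁⟩, lt_abs.mpr (Or.inl ?_)⟩
  calc κ ≤ r * (κ - κ * s) + 2 * κ * s := by nlinarith [mul_nonneg hκ hr₀]
    _ ≤ r * x + s * (2 * κ) := by nlinarith
    _ < r * x + s * y := by gcongr; exact hy

lemma mul_sqrt_mul_gaussianPDFReal_le_pGauss_sub_qGauss {κ r : ℝ} (hκ : 0 ≤ κ) (hr₀ : 0 ≤ r)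
    (hr₁ : r < 1) :
    κ * √(1 - r ^ 2) * (gaussianPDFReal 0 1 κ * gaussianPDFReal 0 1 (2 * κ + 1)) ≤
      pGauss κ - qGauss κ r := by
  set γ := gaussianReal 0 1
  set s := √(1 - r ^ 2)
  have hs : 0 ≤ κ * s := mul_nonneg hκ (Real.sqrt_nonneg _)
  have hs₁ : s ≤ 1 := Real.sqrt_le_one.mpr (by nlinarith)
  have hZ₀ : ENNReal.ofReal (κ * s * gaussianPDFReal 0 1 κ) ≤ γ (Ioc (κ - κ * s) κ) := by
    have := ofReal_mul_gaussianPDFReal_le_gaussianReal_Ioc 0 one_ne_zero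
      (a := κ - κ * s) (b := κ) (by nlinarith)
    rwa [sub_sub_cancel] at this
  have hZ' : ENNReal.ofReal (gaussianPDFReal 0 1 (2 * κ + 1)) ≤ γ (Ioi (2 * κ)) := by
    have := ofReal_mul_gaussianPDFReal_le_gaussianReal_Ioc 0 one_ne_zero
      (a := 2 * κ) (b := 2 * κ + 1) (by linarith)
    rw [add_sub_cancel_left, one_mul] at this
    exact this.trans (measure_mono Ioc_subset_Ioi_self)
  rw [pGauss_sub_qGauss, ← mul_assoc]
  refine (ENNReal.ofReal_le_iff_le_toReal (measure_ne_top _ _)).mp ?_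
  calc ENNReal.ofReal (κ * s * gaussianPDFReal 0 1 κ * gaussianPDFReal 0 1 (2 * κ + 1))
      = ENNReal.ofReal (κ * s * gaussianPDFReal 0 1 κ) *
          ENNReal.ofReal (gaussianPDFReal 0 1 (2 * κ + 1)) :=
        ENNReal.ofReal_mul (mul_nonneg hs (gaussianPDFReal_nonneg _ _ _))
    _ ≤ γ (Ioc (κ - κ * s) κ) * γ (Ioi (2 * κ)) := mul_le_mul' hZ₀ hZ'
    _ = (γ.prod γ) (Ioc (κ - κ * s) κ ×ˢ Ioi (2 * κ)) := (Measure.prod_prod _ _).symm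
    _ ≤ _ := measure_mono (Ioc_prod_Ioi_subset_abs_le_lt_abs hκ hr₀ hr₁)

/-- For every `κ > 0` there exist `r₀ ∈ (0,1)` and `c > 0` such that
`q_κ(r) ≤ p(κ) − c√(1−r)` for all `r ∈ [r₀, 1)`. -/
theorem stmt4 (κ : ℝ) (hκ : 0 < κ) :
    ∃ r₀ ∈ Set.Ioo (0 : ℝ) 1, ∃ c > (0 : ℝ),
      ∀ r ∈ Set.Ico r₀ 1, qGauss κ r ≤ pGauss κ - c * Real.sqrt (1 - r) := by
  set φ := gaussianPDFReal 0 1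
  have hφ : ∀ x, 0 < φ x := fun x => gaussianPDFReal_pos 0 1 x one_ne_zero
  have hc : 0 < κ * (φ κ * φ (2 * κ + 1)) := by
    have := hφ κ
    have := hφ (2 * κ + 1)
    positivity
  refine ⟨1 / 2, ⟨by norm_num, by norm_num⟩, _, hc, fun r ⟨hr₀, hr₁⟩ => ?_⟩
  have hr : 0 ≤ r := by linarith
  have hsqrt : √(1 - r) ≤ √(1 - r ^ 2) := Real.sqrt_le_sqrt (by nlinarith)
  calc qGauss κ r ≤ pGauss κ - κ * √(1 - r ^ 2) * (φ κ * φ (2 * κ + 1)) := by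
        linarith [mul_sqrt_mul_gaussianPDFReal_le_pGauss_sub_qGauss hκ.le hr hr₁]
    _ ≤ pGauss κ - κ * (φ κ * φ (2 * κ + 1)) * √(1 - r) := by
        rw [mul_right_comm κ]
        exact sub_le_sub_left (mul_le_mul_of_nonneg_left hsqrt hc.le) _
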